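/- Let 0 < s < 1, r > 0, and s² < β < 1, with ψ, φ, P₁, P₂², P₃ as in the discriminant setup. Then P₁ < 0, and consequently for all real u, v not both zero, P₁ u² + P₂ u v + P₃ v² < 0 (where P₂ is either square root of P₂²). -/

import Mathlib

noncomputable def coth (x : ℝ) : ℝ := Real.cosh x / Real.sinh x

noncomputable def ψ (a : ℝ) : ℝ := a * coth a - 1

noncomputable def φ (a : ℝ) : ℝ := Real.sinh a - a

open Real Set

/-! Write `t = √β`, `X = ψ (r t)`, `Y = ψ r`. Since `ψ` is positive and strictly increasing
on `(0, ∞)`, `P₁ < 0`. Clearing denominators, the discriminant `P₂² - 4 P₁ P₃` is a positive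
multiple of
`(t² - s²) (4 r (1 - t²) X Y - t² (Y - X) φ(2r)) + (Y - X) (s² / t) (φ(2rt) - t³ φ(2r))`.
The second summand is `≤ 0` by the scaling inequality `φ(xt) ≤ t³ φ(x)`, obtained by
integrating `sinh(xt) ≤ t sinh x` twice. The first is `< 0` because `φ(2r) ≥ 4 sinh r · Y` and
`r (1 - t²) X < t² (Y - X) sinh r`; multiplied by `sinh(rt)` the latter says that
`K(r) = t² (cosh r sinh(rt) - t sinh r cosh(rt)) - (1 - t²) (rt cosh(rt) - sinh(rt))`
is positive, which holds as `K(0) = 0` and `K'(r) = t² (1 - t²) sinh(rt) (sinh r - r)`. -/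

theorem quadratic_neg_of_discrim_neg {K : Type*} [CommRing K] [LinearOrder K]
    [IsStrictOrderedRing K] {a b c : K} (ha : a < 0) (hd : discrim a b c < 0) {u v : K}
    (huv : ¬(u = 0 ∧ v = 0)) : a * u ^ 2 + b * u * v + c * v ^ 2 < 0 := by
  have key : 4 * a * (a * u ^ 2 + b * u * v + c * v ^ 2) =
      (2 * a * u + b * v) ^ 2 - discrim a b c * v ^ 2 := by
    rw [discrim]; ring
  refine neg_of_mul_pos_right ?_ (by linarith : 4 * a ≤ 0)
  rw [key]
  rcases eq_or_ne v 0 with rfl | hv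
  · have hu : u ≠ 0 := fun hu => huv ⟨hu, rfl⟩
    simpa using sq_pos_of_ne_zero (mul_ne_zero (mul_ne_zero two_ne_zero ha.ne) hu)
  · nlinarith [sq_nonneg (2 * a * u + b * v), mul_pos (neg_pos.2 hd) (sq_pos_of_ne_zero hv)]

lemma apply_zero_lt_of_hasDerivAt_pos {f f' : ℝ → ℝ} (hf : ∀ x, HasDerivAt f (f' x) x)
    (hf' : ∀ x, 0 < x → 0 < f' x) {x : ℝ} (hx : 0 < x) : f 0 < f x :=
  strictMonoOn_of_hasDerivWithinAt_pos (convex_Ici 0)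
    (fun y _ => (hf y).continuousAt.continuousWithinAt) (fun y _ => (hf y).hasDerivWithinAt)
    (fun y hy => hf' y (by simpa using hy)) self_mem_Ici hx.le hx

lemma apply_zero_le_of_hasDerivAt_nonneg {f f' : ℝ → ℝ} (hf : ∀ x, HasDerivAt f (f' x) x)
    (hf' : ∀ x, 0 < x → 0 ≤ f' x) {x : ℝ} (hx : 0 ≤ x) : f 0 ≤ f x :=
  monotoneOn_of_hasDerivWithinAt_nonneg (convex_Ici 0)
    (fun y _ => (hf y).continuousAt.continuousWithinAt) (fun y _ => (hf y).hasDerivWithinAt)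
    (fun y hy => hf' y (by simpa using hy)) self_mem_Ici hx hx

lemma sinh_mul_ψ (x : ℝ) : sinh x * ψ x = x * cosh x - sinh x := by
  rcases eq_or_ne x 0 with rfl | hx
  · simp
  · have hs : sinh x ≠ 0 := sinh_ne_zero.2 hx
    unfold ψ coth
    field_simp

lemma sinh_lt_mul_cosh {x : ℝ} (hx : 0 < x) : sinh x < x * cosh x := by
  have := apply_zero_lt_of_hasDerivAt_pos (f := fun y => y * cosh y - sinh y)
    (fun y => ((hasDerivAt_id y).mul (hasDerivAt_cosh y)).sub (hasDerivAt_sinh y))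
    (fun y hy => by simpa using mul_pos hy (sinh_pos_iff.2 hy)) hx
  simpa using this

lemma ψ_pos {x : ℝ} (hx : 0 < x) : 0 < ψ x :=
  pos_of_mul_pos_right (by rw [sinh_mul_ψ]; linarith [sinh_lt_mul_cosh hx])
    (sinh_pos_iff.2 hx).le

lemma ψ_strictMonoOn : StrictMonoOn ψ (Ioi 0) := by
  have hderiv : ∀ y ∈ Ioi (0 : ℝ),
      HasDerivAt ψ ((sinh y * cosh y - y) / sinh y ^ 2) y := by
    intro y hy
    have hs := (sinh_pos_iff.2 hy).ne'
    refine (((hasDerivAt_id' y).mul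
      ((hasDerivAt_cosh y).div (hasDerivAt_sinh y) hs)).sub_const 1).congr_deriv ?_
    simp only [Pi.div_apply]
    field_simp
    linear_combination (-y) * cosh_sq y
  refine strictMonoOn_of_hasDerivWithinAt_pos (convex_Ioi 0)
    (fun y hy => (hderiv y hy).continuousAt.continuousWithinAt)
    (fun y hy => (hderiv y (interior_subset hy)).hasDerivWithinAt) (fun y hy => ?_)
  rw [interior_Ioi] at hy
  have hs := sinh_pos_iff.2 hy
  have : y < sinh y * cosh y := by
    nlinarith [self_lt_sinh_iff.2 hy, mul_nonneg hs.le (sub_nonneg.2 (one_le_cosh y))]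
  exact div_pos (by linarith) (pow_pos hs 2)

lemma ψ_mul_lt {t r : ℝ} (ht0 : 0 < t) (ht1 : t < 1) (hr : 0 < r) : ψ (r * t) < ψ r :=
  ψ_strictMonoOn (mul_pos hr ht0) hr (mul_lt_of_lt_one_right hr ht1)

lemma sinh_mul_le {t : ℝ} (ht0 : 0 ≤ t) (ht1 : t ≤ 1) {r : ℝ} (hr : 0 ≤ r) :
    sinh (r * t) ≤ t * sinh r := by
  have := apply_zero_le_of_hasDerivAt_nonneg (f := fun y => t * sinh y - sinh (y * t))
    (fun y => ((hasDerivAt_sinh y).const_mul t).sub (hasDerivAt_mul_const t).sinh)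
    (fun y hy => by
      have : cosh (y * t) ≤ cosh y := by
        rw [cosh_le_cosh, abs_of_nonneg (by positivity), abs_of_nonneg hy.le]
        nlinarith
      nlinarith) hr
  simpa using this

lemma cosh_mul_sub_one_le {t : ℝ} (ht0 : 0 ≤ t) (ht1 : t ≤ 1) {r : ℝ} (hr : 0 ≤ r) :
    cosh (r * t) - 1 ≤ t ^ 2 * (cosh r - 1) := by
  have := apply_zero_le_of_hasDerivAt_nonneg
    (f := fun y => t ^ 2 * (cosh y - 1) - (cosh (y * t) - 1))
    (fun y => (((hasDerivAt_cosh y).sub_const 1).const_mul _).sub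
      ((hasDerivAt_mul_const t).cosh.sub_const 1))
    (fun y hy => by nlinarith [sinh_mul_le ht0 ht1 hy.le]) hr
  simpa using this

lemma φ_mul_le {t : ℝ} (ht0 : 0 ≤ t) (ht1 : t ≤ 1) {r : ℝ} (hr : 0 ≤ r) :
    φ (r * t) ≤ t ^ 3 * φ r := by
  have := apply_zero_le_of_hasDerivAt_nonneg
    (f := fun y => t ^ 3 * (sinh y - y) - (sinh (y * t) - y * t))
    (fun y => (((hasDerivAt_sinh y).sub (hasDerivAt_id y)).const_mul _).sub
      ((hasDerivAt_mul_const t).sinh.sub (hasDerivAt_mul_const t)))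
    (fun y hy => by nlinarith [cosh_mul_sub_one_le ht0 ht1 hy.le]) hr
  simpa [φ] using this

lemma four_mul_sinh_mul_ψ_le_φ_two_mul {r : ℝ} (hr : 0 ≤ r) :
    4 * (sinh r * ψ r) ≤ φ (2 * r) := by
  have := apply_zero_le_of_hasDerivAt_nonneg
    (f := fun y => (sinh (2 * y) - 2 * y) - 4 * (y * cosh y - sinh y))
    (fun y => (((hasDerivAt_id y).const_mul 2).sinh.sub ((hasDerivAt_id y).const_mul 2)).sub
      ((((hasDerivAt_id y).mul (hasDerivAt_cosh y)).sub (hasDerivAt_sinh y)).const_mul 4))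
    (fun y hy => by
      have hs := sinh_pos_iff.2 hy
      have : y < sinh y := self_lt_sinh_iff.2 hy
      simp only [id, cosh_two_mul, cosh_sq]
      nlinarith [mul_pos hs (sub_pos.2 this)]) hr
  rw [sinh_mul_ψ, φ]
  simpa using this

lemma one_sub_sq_mul_ψ_lt {t r : ℝ} (ht0 : 0 < t) (ht1 : t < 1) (hr : 0 < r) :
    r * (1 - t ^ 2) * ψ (r * t) < t ^ 2 * (ψ r - ψ (r * t)) * sinh r := by
  have hK : 0 < t ^ 2 * (cosh r * sinh (r * t) - t * sinh r * cosh (r * t)) -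
      (1 - t ^ 2) * (r * t * cosh (r * t) - sinh (r * t)) := by
    have := apply_zero_lt_of_hasDerivAt_pos
      (f := fun y => t ^ 2 * (cosh y * sinh (y * t) - t * sinh y * cosh (y * t)) -
        (1 - t ^ 2) * (y * t * cosh (y * t) - sinh (y * t)))
      (f' := fun y => t ^ 2 * (1 - t ^ 2) * sinh (y * t) * (sinh y - y))
      (fun y => by
        refine ((((hasDerivAt_cosh y).mul (hasDerivAt_mul_const t).sinh).sub
          (((hasDerivAt_sinh y).const_mul t).mul (hasDerivAt_mul_const t).cosh)).const_mul _).sub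
          ((((hasDerivAt_mul_const t).mul (hasDerivAt_mul_const t).cosh).sub
            (hasDerivAt_mul_const t).sinh).const_mul _) |>.congr_deriv ?_
        ring)
      (fun y hy => by
        have : 0 < sinh (y * t) := sinh_pos_iff.2 (by positivity)
        have : 0 < 1 - t ^ 2 := by nlinarith
        have : y < sinh y := self_lt_sinh_iff.2 hy
        have : 0 < sinh y - y := by linarith
        positivity) hr
    simpa using this
  have hs : 0 < sinh (r * t) := sinh_pos_iff.2 (by positivity)
  refine lt_of_mul_lt_mul_right ?_ hs.le
  have key : t ^ 2 * (ψ r - ψ (r * t)) * sinh r * sinh (r * t) -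
      r * (1 - t ^ 2) * ψ (r * t) * sinh (r * t) =
      r * (t ^ 2 * (cosh r * sinh (r * t) - t * sinh r * cosh (r * t)) -
        (1 - t ^ 2) * (r * t * cosh (r * t) - sinh (r * t))) := by
    linear_combination t ^ 2 * sinh (r * t) * sinh_mul_ψ r -
      (t ^ 2 * sinh r + r * (1 - t ^ 2)) * sinh_mul_ψ (r * t)
  linarith [mul_pos hr hK]

lemma four_mul_ψ_mul_ψ_lt {t r : ℝ} (ht0 : 0 < t) (ht1 : t < 1) (hr : 0 < r) :
    4 * r * (1 - t ^ 2) * ψ (r * t) * ψ r < t ^ 2 * (ψ r - ψ (r * t)) * φ (2 * r) := by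
  have hY : 0 < ψ r := ψ_pos hr
  have hXY := ψ_mul_lt ht0 ht1 hr
  calc 4 * r * (1 - t ^ 2) * ψ (r * t) * ψ r
      = 4 * ψ r * (r * (1 - t ^ 2) * ψ (r * t)) := by ring
    _ < 4 * ψ r * (t ^ 2 * (ψ r - ψ (r * t)) * sinh r) :=
      mul_lt_mul_of_pos_left (one_sub_sq_mul_ψ_lt ht0 ht1 hr) (by positivity)
    _ = t ^ 2 * (ψ r - ψ (r * t)) * (4 * (sinh r * ψ r)) := by ring
    _ ≤ t ^ 2 * (ψ r - ψ (r * t)) * φ (2 * r) :=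
      mul_le_mul_of_nonneg_left (four_mul_sinh_mul_ψ_le_φ_two_mul hr.le)
        (mul_nonneg (sq_nonneg t) (sub_nonneg.2 hXY.le))

noncomputable def P₁ (r β : ℝ) : ℝ := 2 * √β * (ψ (r * √β) - ψ r) / r

noncomputable def P₂sq (s r β : ℝ) : ℝ := 16 * (β - s ^ 2) * (1 - β) * ψ (r * √β) ^ 2 / β

noncomputable def P₃ (s r β : ℝ) : ℝ :=
  1 / (2 * β * √β) * (s ^ 2 / √β * φ (2 * r * √β) - β ^ 2 * φ (2 * r) +
    4 * r * (β - s ^ 2) * (1 - β) * ψ (r * √β))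

lemma P₁_neg {r β : ℝ} (hr : 0 < r) (hβ0 : 0 < β) (hβ1 : β < 1) : P₁ r β < 0 := by
  have ht0 : 0 < √β := sqrt_pos.2 hβ0
  have ht1 : √β < 1 := (sqrt_lt' one_pos).2 (by simpa using hβ1)
  exact div_neg_of_neg_of_pos (mul_neg_of_pos_of_neg (by positivity)
    (sub_neg.2 (ψ_mul_lt ht0 ht1 hr))) hr

lemma P₂sq_sub_four_mul_P₁_mul_P₃_neg {s r β : ℝ} (hr : 0 < r) (hsβ : s ^ 2 < β)
    (hβ1 : β < 1) :
    P₂sq s r β - 4 * P₁ r β * P₃ s r β < 0 := by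
  have hβ0 : 0 < β := (sq_nonneg s).trans_lt hsβ
  obtain ⟨t, ht0, rfl⟩ : ∃ t, 0 < t ∧ β = t ^ 2 :=
    ⟨√β, sqrt_pos.2 hβ0, (sq_sqrt hβ0.le).symm⟩
  have ht1 : t < 1 := by nlinarith
  have hXY := ψ_mul_lt ht0 ht1 hr
  have hmain := four_mul_ψ_mul_ψ_lt ht0 ht1 hr
  have hφ := φ_mul_le ht0.le ht1.le (mul_nonneg zero_le_two hr.le)
  have hdisc : P₂sq s r (t ^ 2) - 4 * P₁ r (t ^ 2) * P₃ s r (t ^ 2) = 4 / (r * t ^ 2) *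
      ((t ^ 2 - s ^ 2) * (4 * r * (1 - t ^ 2) * ψ (r * t) * ψ r -
          t ^ 2 * (ψ r - ψ (r * t)) * φ (2 * r)) +
        (ψ r - ψ (r * t)) * (s ^ 2 / t) * (φ (2 * r * t) - t ^ 3 * φ (2 * r))) := by
    simp only [P₁, P₂sq, P₃, sqrt_sq ht0.le]
    field_simp
    ring
  rw [hdisc]
  refine mul_neg_of_pos_of_neg (by positivity) (add_neg_of_neg_of_nonpos ?_ ?_)
  · exact mul_neg_of_pos_of_neg (by linarith) (by linarith)
  · exact mul_nonpos_of_nonneg_of_nonpos (by have := sub_pos.2 hXY; positivity) (by linarith)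

theorem stmt_14_general (s r β : ℝ) (hr : 0 < r)
    (hβl : s ^ 2 < β) (hβu : β < 1)
    (P₁ P₂sq P₃ : ℝ)
    (hP₁ : P₁ = 2 * Real.sqrt β * (ψ (r * Real.sqrt β) - ψ r) / r)
    (hP₂sq : P₂sq = 16 * (β - s ^ 2) * (1 - β) * (ψ (r * Real.sqrt β)) ^ 2 / β)
    (hP₃ : P₃ = (1 / (2 * β * Real.sqrt β)) *
      ((s ^ 2 / Real.sqrt β) * φ (2 * r * Real.sqrt β) - β ^ 2 * φ (2 * r) +
        4 * r * (β - s ^ 2) * (1 - β) * ψ (r * Real.sqrt β))) :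
    P₁ < 0 ∧
      ∀ P₂ : ℝ, P₂ ^ 2 = P₂sq →
        ∀ u v : ℝ, ¬(u = 0 ∧ v = 0) →
          P₁ * u ^ 2 + P₂ * u * v + P₃ * v ^ 2 < 0 := by
  subst hP₁ hP₂sq hP₃
  have hP₁neg : P₁ r β < 0 := P₁_neg hr ((sq_nonneg s).trans_lt hβl) hβu
  refine ⟨hP₁neg, fun P₂ hP₂ u v huv => quadratic_neg_of_discrim_neg hP₁neg ?_ huv⟩
  rw [discrim, hP₂]
  exact P₂sq_sub_four_mul_P₁_mul_P₃_neg hr hβl hβu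

theorem stmt_14 (s r β : ℝ) (hs0 : 0 < s) (hs1 : s < 1) (hr : 0 < r)
    (hβl : s ^ 2 < β) (hβu : β < 1)
    (P₁ P₂sq P₃ : ℝ)
    (hP₁ : P₁ = 2 * Real.sqrt β * (ψ (r * Real.sqrt β) - ψ r) / r)
    (hP₂sq : P₂sq = 16 * (β - s ^ 2) * (1 - β) * (ψ (r * Real.sqrt β)) ^ 2 / β)
    (hP₃ : P₃ = (1 / (2 * β * Real.sqrt β)) *
      ((s ^ 2 / Real.sqrt β) * φ (2 * r * Real.sqrt β) - β ^ 2 * φ (2 * r) +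
        4 * r * (β - s ^ 2) * (1 - β) * ψ (r * Real.sqrt β))) :
    P₁ < 0 ∧
      ∀ P₂ : ℝ, P₂ ^ 2 = P₂sq →
        ∀ u v : ℝ, ¬(u = 0 ∧ v = 0) →
          P₁ * u ^ 2 + P₂ * u * v + P₃ * v ^ 2 < 0 :=
  stmt_14_general s r β hr hβl hβu P₁ P₂sq P₃ hP₁ hP₂sq hP₃
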